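/- arXiv:1306.1017 — 3 statements merged into one kernel-verified Lean document; each statement's English description precedes it below -/
import Mathlib

section
/- Let c₁ ≠ c₂ be points of the Euclidean plane with d = dist(c₁, c₂), let r₁, r₂ > 0 with r²(d) ≥ 0, let u = (c₂ − c₁)/d, let p̂ be a unit vector with ⟪p̂, u⟫ = 0, and set c = c₁ + (d₁(d)/d)·(c₂ − c₁). Then the intersection of the circle of center c₁ radius r₁ with the circle of center c₂ radius r₂ is exactly the point pair {c + √(r²(d))·p̂, c − √(r²(d))·p̂}; in particular the two intersection points have midpoint c and distance 2√(r²(d)). -/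
noncomputable section

open scoped RealInnerProductSpace

/-- The squared half-chord of the meet of two circles with radii `r₁, r₂` and center
distance `d`. -/
def rSq (r₁ r₂ d : ℝ) : ℝ :=
  d ^ 2 * (r₁ ^ 2 * r₂ ^ 2 / d ^ 4 - (1 / 4) * (1 - r₁ ^ 2 / d ^ 2 - r₂ ^ 2 / d ^ 2) ^ 2)

/-- The signed distance from the first center to the chord midpoint. -/
def dOne (r₁ r₂ d : ℝ) : ℝ := (1 / 2) * (d + (r₁ ^ 2 - r₂ ^ 2) / d)

/-!
Take an orthonormal frame `u, w` with `u` pointing from `c₁` to `c₂`. Writing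
`x = c₁ + p • u + q • w`, which is possible because the plane is two-dimensional, the two circle
equations become `p² + q² = r₁²` and `(p - d)² + q² = r₂²`. Their difference is linear in `p` and
forces `p = d₁(d)`; substituting back gives `q² = r²(d)`, i.e. `q = ±√(r²(d))`.
-/

open Module Metric

theorem dOne_sq_add_rSq {d : ℝ} (hd : d ≠ 0) (r₁ r₂ : ℝ) :
    dOne r₁ r₂ d ^ 2 + rSq r₁ r₂ d = r₁ ^ 2 := by
  unfold dOne rSq; field_simp; ring

theorem dOne_sub_sq_add_rSq {d : ℝ} (hd : d ≠ 0) (r₁ r₂ : ℝ) :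
    (dOne r₁ r₂ d - d) ^ 2 + rSq r₁ r₂ d = r₂ ^ 2 := by
  unfold dOne rSq; field_simp; ring

theorem sq_add_sq_eq_and_sub_sq_add_sq_eq_iff {d : ℝ} (hd : d ≠ 0) {r₁ r₂ : ℝ}
    (hrsq : 0 ≤ rSq r₁ r₂ d) (p q : ℝ) :
    p ^ 2 + q ^ 2 = r₁ ^ 2 ∧ (p - d) ^ 2 + q ^ 2 = r₂ ^ 2 ↔
      p = dOne r₁ r₂ d ∧ (q = √(rSq r₁ r₂ d) ∨ q = -√(rSq r₁ r₂ d)) := by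
  rw [← sq_eq_sq_iff_eq_or_eq_neg, Real.sq_sqrt hrsq]
  have h₁ := dOne_sq_add_rSq hd r₁ r₂
  have h₂ := dOne_sub_sq_add_rSq hd r₁ r₂
  constructor
  · rintro ⟨e₁, e₂⟩
    have hp : p = dOne r₁ r₂ d := by
      have : 2 * d * p = d ^ 2 + r₁ ^ 2 - r₂ ^ 2 := by linear_combination e₁ - e₂
      unfold dOne; field_simp; linear_combination this
    exact ⟨hp, by subst hp; linarith⟩
  · rintro ⟨rfl, hq⟩
    constructor <;> linarith

section OrthonormalPair

variable {V : Type*} [NormedAddCommGroup V] [InnerProductSpace ℝ V] {u w : V}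

theorem Orthonormal.norm_smul_add_smul_sq (h : Orthonormal ℝ ![u, w]) (a b : ℝ) :
    ‖a • u + b • w‖ ^ 2 = a ^ 2 + b ^ 2 := by
  have hu : ‖u‖ = 1 := h.norm_eq_one 0
  have hw : ‖w‖ = 1 := h.norm_eq_one 1
  have huw : ⟪u, w⟫ = 0 := h.inner_eq_zero (i := 0) (j := 1) (by decide)
  rw [norm_add_sq_real, real_inner_smul_left, real_inner_smul_right, huw, norm_smul, norm_smul,
    hu, hw]
  simp

theorem Orthonormal.inner_smul_add_inner_smul_of_finrank_eq_two (hV : finrank ℝ V = 2)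
    (h : Orthonormal ℝ ![u, w]) (v : V) : ⟪u, v⟫ • u + ⟪w, v⟫ • w = v := by
  have : FiniteDimensional ℝ V := Module.finite_of_finrank_eq_succ hV
  have hspan := h.linearIndependent.span_eq_top_of_card_eq_finrank (by simp [hV])
  simpa [Fin.sum_univ_two] using (OrthonormalBasis.mk h hspan.ge).sum_repr' v

theorem Orthonormal.add_smul_add_smul_mem_sphere_inter_sphere_iff (h : Orthonormal ℝ ![u, w])
    {r₁ r₂ : ℝ} (hr₁ : 0 ≤ r₁) (hr₂ : 0 ≤ r₂) (c₁ : V) (d p q : ℝ) :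
    c₁ + p • u + q • w ∈ sphere c₁ r₁ ∩ sphere (c₁ + d • u) r₂ ↔
      p ^ 2 + q ^ 2 = r₁ ^ 2 ∧ (p - d) ^ 2 + q ^ 2 = r₂ ^ 2 := by
  have e₁ : c₁ + p • u + q • w - c₁ = p • u + q • w := by abel
  have e₂ : c₁ + p • u + q • w - (c₁ + d • u) = (p - d) • u + q • w := by
    rw [sub_smul]; abel
  simp only [Set.mem_inter_iff, mem_sphere, dist_eq_norm, e₁, e₂,
    ← sq_eq_sq₀ (norm_nonneg _) hr₁, ← sq_eq_sq₀ (norm_nonneg _) hr₂, h.norm_smul_add_smul_sq]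

theorem Orthonormal.sphere_inter_sphere_eq_pair (hV : finrank ℝ V = 2)
    (h : Orthonormal ℝ ![u, w]) (c₁ : V) {d r₁ r₂ : ℝ} (hd : d ≠ 0) (hr₁ : 0 ≤ r₁) (hr₂ : 0 ≤ r₂)
    (hrsq : 0 ≤ rSq r₁ r₂ d) :
    sphere c₁ r₁ ∩ sphere (c₁ + d • u) r₂ =
      {c₁ + dOne r₁ r₂ d • u + √(rSq r₁ r₂ d) • w, c₁ + dOne r₁ r₂ d • u - √(rSq r₁ r₂ d) • w} := by
  ext x
  obtain ⟨p, q, rfl⟩ : ∃ p q : ℝ, x = c₁ + p • u + q • w :=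
    ⟨_, _, by
      rw [add_assoc, h.inner_smul_add_inner_smul_of_finrank_eq_two hV (x - c₁), add_sub_cancel]⟩
  have hinj : ∀ p' q' : ℝ, c₁ + p • u + q • w = c₁ + p' • u + q' • w ↔ p = p' ∧ q = q' := by
    intro p' q'
    rw [add_assoc, add_assoc, add_right_inj]
    exact ⟨h.linearIndependent.eq_of_pair, by rintro ⟨rfl, rfl⟩; rfl⟩
  rw [h.add_smul_add_smul_mem_sphere_inter_sphere_iff hr₁ hr₂,
    sq_add_sq_eq_and_sub_sq_add_sq_eq_iff hd hrsq, sub_eq_add_neg, ← neg_smul]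
  simp only [Set.mem_insert_iff, Set.mem_singleton_iff, hinj]
  tauto

end OrthonormalPair

/-- When `r²(d) ≥ 0`, the meet of two circles is exactly the point pair
`{c + √(r²(d))·phat, c − √(r²(d))·phat}`; in particular the two intersection points have
midpoint `c` and distance `2√(r²(d))`. -/
theorem circles_meet_point_pair
    (c₁ c₂ : EuclideanSpace ℝ (Fin 2)) (hc : c₁ ≠ c₂)
    (d r₁ r₂ : ℝ) (hd : d = dist c₁ c₂) (hr₁ : 0 < r₁) (hr₂ : 0 < r₂)
    (hrsq : 0 ≤ rSq r₁ r₂ d)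
    (u phat : EuclideanSpace ℝ (Fin 2)) (hu : u = (1 / d) • (c₂ - c₁))
    (hphat : ‖phat‖ = 1) (hperp : ⟪phat, u⟫ = 0)
    (c : EuclideanSpace ℝ (Fin 2)) (hcdef : c = c₁ + (dOne r₁ r₂ d / d) • (c₂ - c₁)) :
    Metric.sphere c₁ r₁ ∩ Metric.sphere c₂ r₂ =
        {c + Real.sqrt (rSq r₁ r₂ d) • phat, c - Real.sqrt (rSq r₁ r₂ d) • phat} ∧
      midpoint ℝ (c + Real.sqrt (rSq r₁ r₂ d) • phat) (c - Real.sqrt (rSq r₁ r₂ d) • phat) = c ∧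
      dist (c + Real.sqrt (rSq r₁ r₂ d) • phat) (c - Real.sqrt (rSq r₁ r₂ d) • phat) =
        2 * Real.sqrt (rSq r₁ r₂ d) := by
  have hd₀ : 0 < d := hd ▸ dist_pos.2 hc
  have hc₂ : c₂ = c₁ + d • u := by
    rw [hu, smul_smul, mul_one_div_cancel hd₀.ne', one_smul, add_sub_cancel]
  have hc' : c = c₁ + dOne r₁ r₂ d • u := by
    rw [hcdef, hu, smul_smul, div_eq_mul_one_div]
  have hu₁ : ‖u‖ = 1 := by
    rw [hu, norm_smul, ← dist_eq_norm, dist_comm, ← hd, Real.norm_of_nonneg (by positivity)]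
    field_simp
  have hon : Orthonormal ℝ ![u, phat] := by
    simp [hu₁, hphat, real_inner_comm phat u ▸ hperp]
  refine ⟨?_, midpoint_add_sub ℝ _ _, ?_⟩
  · rw [hc₂, hc', hon.sphere_inter_sphere_eq_pair finrank_euclideanSpace_fin c₁ hd₀.ne' hr₁.le
      hr₂.le hrsq]
  · rw [dist_eq_norm, add_sub_sub_cancel, ← two_smul ℝ, smul_smul, norm_smul, hphat, mul_one,
      Real.norm_of_nonneg (by positivity)]
end
end

section
/- Fix r₁, r₂ > 0. As the center distance d tends to infinity, the virtual point pair approaches the asymptotes of its locus hyperbola at angle π/4 to the center line: the ratio √(−r²(d)) / d₁(d) tends to 1 as d → ∞ (note r²(d) < 0 and d₁(d) > 0 for all d > r₁ + r₂). -/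
noncomputable section

open Filter

/-! Factoring out `d / 2`, one has `-r² = (d/2)² (1 - (r₁ + r₂)²/d²)(1 - (r₁ - r₂)²/d²)` and
`d₁ = (d/2)(1 + (r₁² - r₂²)/d²)`. Both factors of `-r²` are positive once `|r₁| + |r₂| < d`, and
the ratio `√(-r²)/d₁` is the quotient of the normalized factors, each of which tends to `1`. -/

theorem neg_rSq_eq {r₁ r₂ d : ℝ} (hd : d ≠ 0) :
    -rSq r₁ r₂ d = (d / 2) ^ 2 * ((1 - (r₁ + r₂) ^ 2 / d ^ 2) * (1 - (r₁ - r₂) ^ 2 / d ^ 2)) := by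
  rw [rSq]
  field_simp
  ring

theorem dOne_eq {r₁ r₂ d : ℝ} (hd : d ≠ 0) :
    dOne r₁ r₂ d = d / 2 * (1 + (r₁ ^ 2 - r₂ ^ 2) / d ^ 2) := by
  rw [dOne]
  field_simp

theorem one_sub_div_sq_pos {x d : ℝ} (h : |x| < d) : 0 < 1 - x ^ 2 / d ^ 2 := by
  have hd : 0 < d := (abs_nonneg x).trans_lt h
  rw [sub_pos, div_lt_one (by positivity), sq_lt_sq, abs_of_pos hd]
  exact h

theorem rSq_neg_of_abs_add_abs_lt {r₁ r₂ d : ℝ} (hd : |r₁| + |r₂| < d) : rSq r₁ r₂ d < 0 := by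
  have hd₀ : 0 < d := by linarith [abs_nonneg r₁, abs_nonneg r₂]
  have hadd := one_sub_div_sq_pos ((abs_add_le r₁ r₂).trans_lt hd)
  have hsub := one_sub_div_sq_pos ((abs_sub r₁ r₂).trans_lt hd)
  have hpos : 0 < -rSq r₁ r₂ d := by rw [neg_rSq_eq hd₀.ne']; positivity
  exact neg_pos.mp hpos

theorem dOne_pos_of_abs_lt {r₁ r₂ d : ℝ} (hd : |r₂| < d) : 0 < dOne r₁ r₂ d := by
  have hd₀ : 0 < d := (abs_nonneg r₂).trans_lt hd
  have hfactor : 0 < 1 + (r₁ ^ 2 - r₂ ^ 2) / d ^ 2 := by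
    have hr₂ := one_sub_div_sq_pos hd
    have hr₁ : 0 ≤ r₁ ^ 2 / d ^ 2 := by positivity
    rw [sub_div]
    linarith
  rw [dOne_eq hd₀.ne']
  positivity

theorem sqrt_neg_rSq_div_dOne {r₁ r₂ d : ℝ} (hd : 0 < d) :
    √(-rSq r₁ r₂ d) / dOne r₁ r₂ d =
      √((1 - (r₁ + r₂) ^ 2 / d ^ 2) * (1 - (r₁ - r₂) ^ 2 / d ^ 2)) /
        (1 + (r₁ ^ 2 - r₂ ^ 2) / d ^ 2) := by
  have hd₂ : 0 < d / 2 := half_pos hd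
  rw [neg_rSq_eq hd.ne', dOne_eq hd.ne', Real.sqrt_mul (sq_nonneg _), Real.sqrt_sq hd₂.le,
    mul_div_mul_left _ _ hd₂.ne']

theorem tendsto_sqrt_mul_one_sub_div_sq_div_one_add_div_sq (a b c : ℝ) :
    Tendsto (fun d : ℝ => √((1 - a / d ^ 2) * (1 - b / d ^ 2)) / (1 + c / d ^ 2))
      atTop (nhds 1) := by
  have h : ∀ e : ℝ, Tendsto (fun d : ℝ => e / d ^ 2) atTop (nhds 0) := fun e =>
    tendsto_const_nhds.div_atTop (tendsto_pow_atTop two_ne_zero)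
  have one : Tendsto (fun _ : ℝ => (1 : ℝ)) atTop (nhds 1) := tendsto_const_nhds
  have := ((one.sub (h a)).mul (one.sub (h b))).sqrt.div (one.add (h c)) (by norm_num)
  simpa [Pi.div_def] using this

/-- As the center distance `d` tends to infinity, the virtual point pair approaches the
asymptotes of its locus hyperbola at angle `π/4` to the center line:
`√(−r²(d)) / d₁(d) → 1` (note `r²(d) < 0` and `d₁(d) > 0` for all `d > r₁ + r₂`). -/
theorem virtual_meet_asymptote (r₁ r₂ : ℝ) (hr₁ : 0 < r₁) (hr₂ : 0 < r₂) :
    (∀ d : ℝ, r₁ + r₂ < d → rSq r₁ r₂ d < 0 ∧ 0 < dOne r₁ r₂ d) ∧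
      Tendsto (fun d : ℝ => Real.sqrt (-(rSq r₁ r₂ d)) / dOne r₁ r₂ d) atTop (nhds 1) := by
  refine ⟨fun d hd => ?_, ?_⟩
  · rw [← abs_of_pos hr₁, ← abs_of_pos hr₂] at hd
    exact ⟨rSq_neg_of_abs_add_abs_lt hd, dOne_pos_of_abs_lt (by linarith [abs_nonneg r₁])⟩
  · refine (tendsto_sqrt_mul_one_sub_div_sq_div_one_add_div_sq
      ((r₁ + r₂) ^ 2) ((r₁ - r₂) ^ 2) (r₁ ^ 2 - r₂ ^ 2)).congr' ?_
    filter_upwards [eventually_gt_atTop 0] with d hd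
    exact (sqrt_neg_rSq_div_dOne hd).symm
end
end

section
/- Let c₁ ≠ c₂ be points of Euclidean 3-space with d = dist(c₁, c₂), let r₁, r₂ > 0, and set c = c₁ + (d₁(d)/d)·(c₂ − c₁) with d₁(d) = ½(d + (r₁² − r₂²)/d). If r²(d) ≥ 0, then the intersection of the sphere of center c₁ radius r₁ with the sphere of center c₂ radius r₂ is exactly the circle {p : dist(p, c) = √(r²(d)) and ⟪p − c, c₂ − c₁⟫ = 0}, i.e. the circle of radius √(r²(d)) centered at c in the plane through c perpendicular to the center line; if r²(d) < 0, the intersection is empty. -/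
noncomputable section

open scoped RealInnerProductSpace

/-!
A point `p` lies on both spheres iff `‖p - c₁‖² = r₁²` and `‖p - c₁‖² - ‖p - c₂‖² = r₁² - r₂²`.
The second equation is affine in `p`: it says `⟪p - c, c₂ - c₁⟫ = 0`, because the foot `c`
is chosen with `d₁² - (d - d₁)² = r₁² - r₂²`. On that plane Pythagoras gives
`‖p - c₁‖² = ‖p - c‖² + d₁²`, so the first equation becomes `‖p - c‖² = r₁² - d₁² = r²(d)`,
which has no solution when `r²(d) < 0`.
-/

lemma dOne_sq_sub_sq {r₁ r₂ d : ℝ} (hd : d ≠ 0) :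
    dOne r₁ r₂ d ^ 2 - (d - dOne r₁ r₂ d) ^ 2 = r₁ ^ 2 - r₂ ^ 2 := by
  unfold dOne
  field_simp
  ring

lemma rSq_eq_sub_dOne_sq {r₁ r₂ d : ℝ} (hd : d ≠ 0) :
    rSq r₁ r₂ d = r₁ ^ 2 - dOne r₁ r₂ d ^ 2 := by
  unfold rSq dOne
  field_simp
  ring

lemma mem_sphere_iff_norm_sub_sq {E : Type*} [SeminormedAddCommGroup E] {p c : E} {r : ℝ}
    (hr : 0 ≤ r) : p ∈ Metric.sphere c r ↔ ‖p - c‖ ^ 2 = r ^ 2 := by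
  rw [mem_sphere_iff_norm, sq_eq_sq₀ (norm_nonneg _) hr]

section InnerProductSpace

variable {E : Type*} [NormedAddCommGroup E] [InnerProductSpace ℝ E]

lemma norm_sub_sq_sub_norm_sub_sq (p c c₁ c₂ : E) :
    ‖p - c₁‖ ^ 2 - ‖p - c₂‖ ^ 2 = ‖c - c₁‖ ^ 2 - ‖c - c₂‖ ^ 2 + 2 * ⟪p - c, c₂ - c₁⟫ := by
  simp only [norm_sub_sq_real, inner_sub_left, inner_sub_right]
  ring

lemma norm_add_smul_sq (u v : E) (t : ℝ) :
    ‖u + t • v‖ ^ 2 = ‖u‖ ^ 2 + 2 * t * ⟪u, v⟫ + t ^ 2 * ‖v‖ ^ 2 := by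
  rw [norm_add_sq_real, real_inner_smul_right, norm_smul, Real.norm_eq_abs, mul_pow, sq_abs]
  ring

lemma mem_sphere_inter_sphere_iff {c₁ c₂ : E} (hc : c₁ ≠ c₂) {d r₁ r₂ : ℝ}
    (hd : d = dist c₁ c₂) (hr₁ : 0 ≤ r₁) (hr₂ : 0 ≤ r₂) {c : E}
    (hcdef : c = c₁ + (dOne r₁ r₂ d / d) • (c₂ - c₁)) (p : E) :
    p ∈ Metric.sphere c₁ r₁ ∩ Metric.sphere c₂ r₂ ↔
      ‖p - c‖ ^ 2 = rSq r₁ r₂ d ∧ ⟪p - c, c₂ - c₁⟫ = 0 := by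
  set a := dOne r₁ r₂ d
  have hd₀ : d ≠ 0 := hd ▸ dist_ne_zero.mpr hc
  have hv : ‖c₂ - c₁‖ = d := by rw [hd, ← dist_eq_norm, dist_comm]
  have hsmul (t : ℝ) : ‖t • (c₂ - c₁)‖ ^ 2 = (t * d) ^ 2 := by
    rw [norm_smul, Real.norm_eq_abs, hv, mul_pow, sq_abs, mul_pow]
  have hc₁ : ‖c - c₁‖ ^ 2 = a ^ 2 := by
    rw [show c - c₁ = (a / d) • (c₂ - c₁) by rw [hcdef]; abel, hsmul, div_mul_cancel₀ _ hd₀]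
  have hc₂ : ‖c - c₂‖ ^ 2 = (d - a) ^ 2 := by
    rw [show c - c₂ = (a / d - 1) • (c₂ - c₁) by rw [hcdef]; module, hsmul]
    field_simp
    ring
  have radical : ‖p - c₁‖ ^ 2 - ‖p - c₂‖ ^ 2 = r₁ ^ 2 - r₂ ^ 2 + 2 * ⟪p - c, c₂ - c₁⟫ := by
    rw [norm_sub_sq_sub_norm_sub_sq p c, hc₁, hc₂, dOne_sq_sub_sq hd₀]
  have pythagoras :
      ‖p - c₁‖ ^ 2 = ‖p - c‖ ^ 2 + 2 * (a / d) * ⟪p - c, c₂ - c₁⟫ + a ^ 2 := by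
    rw [show p - c₁ = (p - c) + (a / d) • (c₂ - c₁) by rw [hcdef]; abel,
      norm_add_smul_sq, hv]
    field_simp
  rw [Set.mem_inter_iff, mem_sphere_iff_norm_sub_sq hr₁, mem_sphere_iff_norm_sub_sq hr₂,
    rSq_eq_sub_dOne_sq hd₀]
  constructor
  · rintro ⟨h₁, h₂⟩
    have hy : ⟪p - c, c₂ - c₁⟫ = 0 := by linarith
    exact ⟨by rw [hy] at pythagoras; linarith, hy⟩
  · rintro ⟨hx, hy⟩
    rw [hy] at radical pythagoras
    constructor <;> linarith

end InnerProductSpace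

/-- Full meet of two spheres: if `r²(d) ≥ 0` the intersection is the circle of radius
`√(r²(d))` centered at `c = c₁ + (d₁(d)/d)·(c₂ − c₁)` in the plane through `c`
perpendicular to the center line; if `r²(d) < 0` the intersection is empty. -/
theorem spheres_meet
    (c₁ c₂ : EuclideanSpace ℝ (Fin 3)) (hc : c₁ ≠ c₂)
    (d r₁ r₂ : ℝ) (hd : d = dist c₁ c₂) (hr₁ : 0 < r₁) (hr₂ : 0 < r₂)
    (c : EuclideanSpace ℝ (Fin 3)) (hcdef : c = c₁ + (dOne r₁ r₂ d / d) • (c₂ - c₁)) :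
    (0 ≤ rSq r₁ r₂ d → Metric.sphere c₁ r₁ ∩ Metric.sphere c₂ r₂ =
        {p | dist p c = Real.sqrt (rSq r₁ r₂ d) ∧ ⟪p - c, c₂ - c₁⟫ = 0}) ∧
      (rSq r₁ r₂ d < 0 → Metric.sphere c₁ r₁ ∩ Metric.sphere c₂ r₂ = ∅) := by
  have key := mem_sphere_inter_sphere_iff hc hd hr₁.le hr₂.le hcdef
  refine ⟨fun hpos => ?_, fun hneg => ?_⟩
  · ext p
    rw [key, Set.mem_ofPred_eq, dist_eq_norm, ← sq_eq_sq₀ (norm_nonneg _) (Real.sqrt_nonneg _),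
      Real.sq_sqrt hpos]
  · refine Set.eq_empty_of_forall_notMem fun p hp => ?_
    linarith [((key p).mp hp).1, sq_nonneg ‖p - c‖]
end
end
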